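/- Let X be a real b×n matrix with b < n, η a nonzero real number, and G_0, …, G_{E−1} real b×m matrices, and define W^{t+1} = W^t − η·Xᵀ·G_t for t = 0, …, E−1 from an arbitrary W^0. If the matrix ∑_{t=0}^{E−1} G_t has full rank b, then the column span of W^0 − W^E equals the row span of X. -/

import Mathlib

/-!
Summing the updates telescopes: `W⁰ - Wᴱ = Xᵀ (η ∑ₜ Gₜ)`. A `b × m` matrix of rank `b` maps
onto `ℝᵇ`, so the column space of `Xᵀ (η ∑ₜ Gₜ)` is the whole column space of `Xᵀ`, which is
the row space of `X`.
-/

open Matrix Finset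

namespace Matrix

variable {K m n p : Type*}

theorem range_mulVecLin_eq_top_of_rank_eq [Field K] [Fintype m] [Fintype n]
    {A : Matrix m n K} (hA : A.rank = Fintype.card m) : LinearMap.range A.mulVecLin = ⊤ :=
  Submodule.eq_top_of_finrank_eq (by rwa [← rank, Module.finrank_fintype_fun_eq_card])

theorem range_mulVecLin_mul_of_range_eq_top [CommSemiring K] [Fintype n] [Fintype p]
    (A : Matrix m n K) {B : Matrix n p K} (hB : LinearMap.range B.mulVecLin = ⊤) :
    LinearMap.range (A * B).mulVecLin = LinearMap.range A.mulVecLin := by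
  rw [mulVecLin_mul, LinearMap.range_comp, hB, Submodule.map_top]

end Matrix

theorem fedavg_colSpan_eq_rowSpan_general
    (b n m E : ℕ) (η : ℝ) (hη : η ≠ 0)
    (X : Matrix (Fin b) (Fin n) ℝ)
    (G : ℕ → Matrix (Fin b) (Fin m) ℝ)
    (W : ℕ → Matrix (Fin n) (Fin m) ℝ)
    (hW : ∀ t < E, W (t + 1) = W t - η • (Xᵀ * G t))
    (hG : (∑ t ∈ Finset.range E, G t).rank = b) :
    Submodule.span ℝ (Set.range (W 0 - W E)ᵀ) = Submodule.span ℝ (Set.range X) := by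
  have htelescope : W 0 - W E = Xᵀ * (η • ∑ t ∈ range E, G t) := by
    rw [← sum_range_sub', Matrix.mul_smul, Matrix.mul_sum, smul_sum]
    exact sum_congr rfl fun t ht ↦ by rw [hW t (mem_range.mp ht), sub_sub_cancel]
  have hsurj : LinearMap.range (η • ∑ t ∈ range E, G t).mulVecLin = ⊤ :=
    range_mulVecLin_eq_top_of_rank_eq <| by
      rw [rank_smul_of_mem_nonZeroDivisors _ (mem_nonZeroDivisors_of_ne_zero hη), hG,
        Fintype.card_fin]
  calc Submodule.span ℝ (Set.range (W 0 - W E)ᵀ)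
      = LinearMap.range (W 0 - W E).mulVecLin := (range_mulVecLin _).symm
    _ = LinearMap.range Xᵀ.mulVecLin := by
      rw [htelescope, range_mulVecLin_mul_of_range_eq_top _ hsurj]
    _ = Submodule.span ℝ (Set.range X) := range_mulVecLin _

/-- For `E` steps of gradient descent `W^{t+1} = W^t − η·Xᵀ·G_t` with
`b < n`, `η ≠ 0`, and `∑_t G_t` of full rank `b`, the column span of `W^0 − W^E`
equals the row span of `X`. -/
theorem fedavg_colSpan_eq_rowSpan
    (b n m E : ℕ) (hbn : b < n) (η : ℝ) (hη : η ≠ 0)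
    (X : Matrix (Fin b) (Fin n) ℝ)
    (G : ℕ → Matrix (Fin b) (Fin m) ℝ)
    (W : ℕ → Matrix (Fin n) (Fin m) ℝ)
    (hW : ∀ t < E, W (t + 1) = W t - η • (Xᵀ * G t))
    (hG : (∑ t ∈ Finset.range E, G t).rank = b) :
    Submodule.span ℝ (Set.range (W 0 - W E)ᵀ) = Submodule.span ℝ (Set.range X) :=
  fedavg_colSpan_eq_rowSpan_general b n m E η hη X G W hW hG
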